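/- One-step overcoverage comparison: let S = (S_{L+1},...,S_{n+1}) be a random vector of real scores, τ ∈ {0,...,n-L}, α ∈ (0,1). Then for every i ∈ {L+1,...,n+1}, P(S_{n+1} ≤ Quantile_{1-α}(S)) ≤ P(S_i ≤ Quantile_{1-α+τ/(n-L+1)}(S)) + Ψ_{i-L,τ}(S). -/

import Mathlib

open MeasureTheory
open scoped ENNReal

/-- The `j`-th order statistic (1-indexed) of a finite real vector. -/
noncomputable def orderStat {m : ℕ} (v : Fin m → ℝ) (j : ℕ) : ℝ :=
  ((List.ofFn v).mergeSort (fun x y => x ≤ y)).getD (j - 1) 0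

/-- `Quantile b v` is the `⌈b·m⌉`-th order statistic of `v ∈ ℝ^m`, with the conventions
`Quantile b v = ⊤` if `b > 1` and `Quantile b v = ⊥` if `b ≤ 0`. -/
noncomputable def Quantile {m : ℕ} (b : ℝ) (v : Fin m → ℝ) : EReal :=
  if b > 1 then ⊤ else if b ≤ 0 then ⊥ else ((orderStat v ⌈b * m⌉.toNat : ℝ) : EReal)

/-- The deletion operator `Δ⁰_{k,τ}` of the paper (with `k` and `τ` counts of entries). -/
def delta0 {α : Type*} (m k τ : ℕ) (w : Fin m → α) : Fin (m - τ) → α :=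
  fun i =>
    if i.val < m - τ - k then w ⟨i.val, by have := i.isLt; omega⟩
    else w ⟨i.val + τ, by have := i.isLt; omega⟩

/-- The deletion operator `Δ¹_{k,τ}` of the paper. -/
def delta1 {α : Type*} (m k τ : ℕ) (w : Fin m → α) : Fin (m - τ) → α :=
  fun i =>
    if h : k + τ < m then
      if h2 : i.val < m - τ - k then w ⟨i.val + k + τ, by have := i.isLt; omega⟩
      else w ⟨i.val - (m - τ - k), by have := i.isLt; omega⟩
    else w ⟨(i.val + k + τ - m) % m, Nat.mod_lt _ (by have := i.isLt; omega)⟩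

/-- Total variation distance between the laws of two random elements `U, V` under `P`. -/
noncomputable def dTV {Ω γ : Type*} [MeasurableSpace Ω] [MeasurableSpace γ]
    (P : Measure Ω) (U V : Ω → γ) : ℝ :=
  ⨆ E : {E : Set γ // MeasurableSet E}, |(P (U ⁻¹' E.1)).toReal - (P (V ⁻¹' E.1)).toReal|

/-- The switch coefficient `Ψ_{k,τ}(W)` of a random vector `W` of length `m`. -/
noncomputable def switchCoef {Ω α : Type*} [MeasurableSpace Ω] [MeasurableSpace α]
    (P : Measure Ω) {m : ℕ} (W : Ω → Fin m → α) (k τ : ℕ) : ℝ :=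
  dTV P (fun ω => delta0 m k τ (W ω)) (fun ω => delta1 m k τ (W ω))

/-- The averaged switch coefficient `Ψ̄_τ(W) = (1/m) ∑_{k=1}^m Ψ_{k,τ}(W)`. -/
noncomputable def avgSwitchCoef {Ω α : Type*} [MeasurableSpace Ω] [MeasurableSpace α]
    (P : Measure Ω) {m : ℕ} (W : Ω → Fin m → α) (τ : ℕ) : ℝ :=
  (∑ k ∈ Finset.Icc 1 m, switchCoef P W k τ) / m

/-- Stationarity of a time series `Z = (Z_1,…,Z_{n+1})`. -/
def Stationary {Ω α : Type*} [MeasurableSpace Ω] [MeasurableSpace α]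
    (P : Measure Ω) {n : ℕ} (Z : Ω → Fin (n + 1) → α) : Prop :=
  ∀ (ℓ i : ℕ) (h : i + ℓ ≤ n + 1),
    Measure.map (fun ω (j : Fin ℓ) => Z ω ⟨i + j.val, by have := j.isLt; omega⟩) P =
      Measure.map (fun ω (j : Fin ℓ) => Z ω ⟨j.val, by have := j.isLt; omega⟩) P

/-- Exchangeability of a random vector. -/
def Exchangeable {Ω α : Type*} [MeasurableSpace Ω] [MeasurableSpace α]
    (P : Measure Ω) {n : ℕ} (Z : Ω → Fin (n + 1) → α) : Prop :=
  ∀ σ : Equiv.Perm (Fin (n + 1)),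
    Measure.map (fun ω => Z ω ∘ σ) P = Measure.map Z P

/-- The β-mixing coefficient with lag `τ` of `Z`, defined via an independent copy `Z'`. -/
noncomputable def betaMix {Ω α : Type*} [MeasurableSpace Ω] [MeasurableSpace α]
    (P : Measure Ω) (n : ℕ) (Z Z' : Ω → Fin (n + 1) → α) (τ : ℕ) : ℝ :=
  ⨆ k : Fin (n - τ),
    dTV P
      (fun ω (i : Fin (n + 1 - τ)) =>
        if i.val < k.val + 1 then Z ω ⟨i.val, by have := i.isLt; omega⟩
        else Z ω ⟨i.val + τ, by have := i.isLt; omega⟩)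
      (fun ω (i : Fin (n + 1 - τ)) =>
        if i.val < k.val + 1 then Z ω ⟨i.val, by have := i.isLt; omega⟩
        else Z' ω ⟨i.val + τ, by have := i.isLt; omega⟩)

/-! Let `m = n - L + 1` and `q = ⌈(1 - α) m⌉`. Deleting entries of a vector can only raise its
`q`-th order statistic, and `Δ⁰` keeps the last score, so the event `S_{n+1} ≤ Quantile_{1-α}(S)`
implies the event `E = {v | v_last ≤ q-th order statistic of v}` for `v = Δ⁰(S)`. Replacing `Δ⁰(S)`
by `Δ¹(S)` changes `P(E)` by at most `Ψ_{i-L,τ}(S)`, and the last entry of `Δ¹(S)` is `S_i`.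
Reinserting the `τ` deleted scores lowers the `q`-th order statistic to at most the `(q + τ)`-th one
of `S`, which is `Quantile_{1-α+τ/m}(S)`; if `1 - α + τ/m > 1` that quantile is `∞` anyway. -/

open Finset Function

theorem List.Pairwise.antitone_getElem_iff_lt_countP {α : Type*} [Preorder α] {l : List α}
    (hl : l.Pairwise (· ≤ ·)) {p : α → Bool} (hp : Antitone p) {j : ℕ} (hj : j < l.length) :
    p l[j] ↔ j < l.countP p := by
  have hmono : ∀ s t (hs : s < l.length) (ht : t < l.length), s ≤ t → p l[t] → p l[s] := by
    intro s t hs ht hst hpt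
    rcases hst.eq_or_lt with rfl | hlt
    · exact hpt
    · exact le_antisymm (Bool.le_true _) (hpt ▸ hp (List.pairwise_iff_getElem.mp hl s t hs ht hlt))
  constructor
  · intro hpj
    have htake : (l.take (j + 1)).countP p = j + 1 := by
      rw [List.countP_eq_length.mpr, List.length_take, min_eq_left hj]
      intro a ha
      obtain ⟨t, ht, rfl⟩ := List.mem_iff_getElem.mp ha
      rw [List.length_take] at ht
      rw [List.getElem_take]
      exact hmono t j _ hj (by omega) hpj
    calc j < (l.take (j + 1)).countP p := by omega
      _ ≤ l.countP p := (List.take_sublist _ _).countP_le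
  · intro hlt
    by_contra hpj
    have hdrop : (l.drop j).countP p = 0 := by
      rw [List.countP_eq_zero]
      intro a ha hpa
      obtain ⟨t, ht, rfl⟩ := List.mem_iff_getElem.mp ha
      rw [List.length_drop] at ht
      rw [List.getElem_drop] at hpa
      exact hpj (hmono j (j + t) hj (by omega) (by omega) hpa)
    have : l.countP p ≤ j := by
      rw [← List.take_append_drop j l, List.countP_append, hdrop, add_zero]
      exact (List.countP_le_length).trans (List.length_take_le _ _)
    omega

theorem List.countP_ofFn {α : Type*} {m : ℕ} (v : Fin m → α) (p : α → Bool) :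
    (List.ofFn v).countP p = #{i | p (v i)} := by
  induction m with
  | zero => simp
  | succ m ih =>
    rw [List.ofFn_succ, List.countP_cons, ih, card_filter, card_filter, Fin.sum_univ_succ]
    simp [add_comm]

theorem Antitone.apply_orderStat_iff {m : ℕ} (v : Fin m → ℝ) {p : ℝ → Bool} (hp : Antitone p)
    {j : ℕ} (hj1 : 1 ≤ j) (hjm : j ≤ m) : p (orderStat v j) ↔ j ≤ #{i | p (v i)} := by
  have hperm := List.mergeSort_perm (List.ofFn v) (fun x y => decide (x ≤ y))
  have hlen : j - 1 < ((List.ofFn v).mergeSort (fun x y => x ≤ y)).length := by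
    rw [hperm.length_eq, List.length_ofFn]; omega
  rw [orderStat, List.getD_eq_getElem _ _ hlen,
    (List.pairwise_mergeSort' _ _).antitone_getElem_iff_lt_countP hp, hperm.countP_eq,
    List.countP_ofFn]
  omega

theorem orderStat_le_iff {m : ℕ} (v : Fin m → ℝ) {j : ℕ} (hj1 : 1 ≤ j) (hjm : j ≤ m) (c : ℝ) :
    orderStat v j ≤ c ↔ j ≤ #{i | v i ≤ c} := by
  have hp : Antitone fun x => decide (x ≤ c) := fun x y hxy =>
    Bool.le_iff_imp.mpr (by simpa using hxy.trans)
  simpa using hp.apply_orderStat_iff v hj1 hjm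

theorem orderStat_lt_iff {m : ℕ} (v : Fin m → ℝ) {j : ℕ} (hj1 : 1 ≤ j) (hjm : j ≤ m) (c : ℝ) :
    orderStat v j < c ↔ j ≤ #{i | v i < c} := by
  have hp : Antitone fun x => decide (x < c) := fun x y hxy =>
    Bool.le_iff_imp.mpr (by simpa using hxy.trans_lt)
  simpa using hp.apply_orderStat_iff v hj1 hjm

section Reindex

variable {ι κ : Type*} [Fintype ι] [Fintype κ] {e : ι → κ}

theorem card_filter_comp_le (he : Injective e) (q : κ → Prop) [DecidablePred q] :
    #{i | q (e i)} ≤ #{x | q x} :=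
  card_le_card_of_injOn e (fun i hi => by simpa using hi) he.injOn

theorem card_filter_le_card_filter_comp_add (he : Injective e) (q : κ → Prop) [DecidablePred q] :
    #{x | q x} ≤ #{i | q (e i)} + (Fintype.card κ - Fintype.card ι) := by
  classical
  let f : ι ↪ κ := ⟨e, he⟩
  calc #{x | q x} ≤ #(({i | q (e i)} : Finset ι).map f ∪ (univ.map f)ᶜ) := by
        refine card_le_card fun x hx => ?_
        by_cases hxe : x ∈ Set.range e
        · obtain ⟨i, rfl⟩ := hxe
          simp_all [f]
        · simp_all [f]
    _ ≤ #{i | q (e i)} + (Fintype.card κ - Fintype.card ι) := by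
        refine (card_union_le _ _).trans ?_
        rw [card_map, card_compl, card_map, card_univ]

theorem orderStat_le_orderStat_comp {a M : ℕ} (v : Fin M → ℝ) {e : Fin a → Fin M}
    (he : Injective e) {j : ℕ} (hj1 : 1 ≤ j) (hja : j ≤ a) :
    orderStat v j ≤ orderStat (v ∘ e) j := by
  have haM : a ≤ M := by simpa using Fintype.card_le_of_injective e he
  rw [orderStat_le_iff v hj1 (hja.trans haM)]
  calc j ≤ #{i | v (e i) ≤ orderStat (v ∘ e) j} := (orderStat_le_iff (v ∘ e) hj1 hja _).mp le_rfl
    _ ≤ _ := card_filter_comp_le he (fun x => v x ≤ orderStat (v ∘ e) j)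

theorem orderStat_comp_le_orderStat_add {a M : ℕ} (v : Fin M → ℝ) {e : Fin a → Fin M}
    (he : Injective e) {j : ℕ} (hj1 : 1 ≤ j) (hjM : j + (M - a) ≤ M) :
    orderStat (v ∘ e) j ≤ orderStat v (j + (M - a)) := by
  have haM : a ≤ M := by simpa using Fintype.card_le_of_injective e he
  set c := orderStat v (j + (M - a))
  have hcount : j + (M - a) ≤ #{x | v x ≤ c} := (orderStat_le_iff v (by omega) hjM c).mp le_rfl
  have hreindex := card_filter_le_card_filter_comp_add he (fun x => v x ≤ c)
  simp only [Fintype.card_fin] at hreindex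
  rw [orderStat_le_iff (v ∘ e) hj1 (by omega)]
  exact Nat.le_of_add_le_add_right (hcount.trans hreindex)

end Reindex

section Deletion

variable {α : Type*} {m k τ : ℕ}

theorem delta0_eq_comp (w : Fin m → α) : delta0 m k τ w = w ∘ delta0 m k τ id := by
  funext i
  simp only [delta0, comp_apply]
  split <;> rfl

theorem delta1_eq_comp (w : Fin m → α) : delta1 m k τ w = w ∘ delta1 m k τ id := by
  funext i
  simp only [delta1, comp_apply]
  split
  · split <;> rfl
  · rfl

theorem delta0_id_injective : Injective (delta0 m k τ id) := by
  intro i j h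
  simp only [delta0, id] at h
  apply Fin.ext
  split_ifs at h <;> simp only [Fin.mk.injEq] at h <;> omega

theorem delta1_id_injective : Injective (delta1 m k τ id) := by
  intro i j h
  have hi := i.isLt
  have hj := j.isLt
  simp only [delta1, id] at h
  apply Fin.ext
  split_ifs at h with hkτ <;> simp only [Fin.mk.injEq] at h
  all_goals try omega
  -- the rotation `i ↦ (i + (k + τ - m)) % m` is injective on `i < m`
  have hmod : i.val + (k + τ - m) ≡ j.val + (k + τ - m) [MOD m] := by
    rwa [Nat.ModEq, ← Nat.add_sub_assoc (by omega), ← Nat.add_sub_assoc (by omega), ← add_assoc,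
      ← add_assoc]
  have := Nat.ModEq.add_right_cancel' _ hmod
  rwa [Nat.ModEq, Nat.mod_eq_of_lt (by omega), Nat.mod_eq_of_lt (by omega)] at this

theorem delta0_apply_last (w : Fin m → α) (hk : 1 ≤ k) (hτ : τ < m) :
    delta0 m k τ w ⟨m - τ - 1, by omega⟩ = w ⟨m - 1, by omega⟩ := by
  simp only [delta0]
  rw [if_neg (by omega)]
  congr 1
  ext
  simp only
  omega

theorem delta1_apply_last (w : Fin m → α) (hk1 : 1 ≤ k) (hk : k ≤ m) (hτ : τ < m) :
    delta1 m k τ w ⟨m - τ - 1, by omega⟩ = w ⟨k - 1, by omega⟩ := by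
  simp only [delta1]
  split
  · rw [dif_neg (by omega)]
    congr 1
    ext
    simp only
    omega
  · congr 1
    ext
    simp only
    rw [Nat.mod_eq_of_lt (by omega)]
    omega

end Deletion

section TotalVariation

variable {Ω γ : Type*} [MeasurableSpace Ω] [MeasurableSpace γ] (P : Measure Ω) (U V : Ω → γ)

theorem dTV_nonneg : 0 ≤ dTV P U V :=
  Real.iSup_nonneg fun _ => abs_nonneg _

theorem measureReal_preimage_le_add_dTV [IsFiniteMeasure P] {E : Set γ} (hE : MeasurableSet E) :
    (P (U ⁻¹' E)).toReal ≤ (P (V ⁻¹' E)).toReal + dTV P U V := by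
  have hbdd : BddAbove (Set.range fun E : {E : Set γ // MeasurableSet E} =>
      |(P (U ⁻¹' E.1)).toReal - (P (V ⁻¹' E.1)).toReal|) := by
    refine ⟨(P Set.univ).toReal, Set.forall_mem_range.mpr fun E => ?_⟩
    exact abs_sub_le_of_nonneg_of_le ENNReal.toReal_nonneg (measureReal_mono (Set.subset_univ _))
      ENNReal.toReal_nonneg (measureReal_mono (Set.subset_univ _))
  have hE := (le_abs_self _).trans (le_ciSup hbdd ⟨E, hE⟩)
  rw [dTV]
  linarith

end TotalVariation

theorem measurableSet_card_filter_lt_lt {d : ℕ} (l : Fin d) (q : ℕ) :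
    MeasurableSet {v : Fin d → ℝ | #{j | v j < v l} < q} := by
  have hcount : Measurable fun v : Fin d → ℝ => #{j | v j < v l} := by
    simp only [card_filter]
    refine Finset.measurable_sum _ fun j _ => Measurable.ite ?_ measurable_const measurable_const
    exact measurableSet_lt (measurable_pi_apply j) (measurable_pi_apply l)
  exact hcount measurableSet_Iio

theorem quantile_eq_orderStat {m : ℕ} (v : Fin m → ℝ) {b : ℝ} (hb0 : 0 < b) (hb1 : b ≤ 1) :
    Quantile b v = orderStat v ⌈b * m⌉.toNat := by
  rw [Quantile, if_neg hb1.not_gt, if_neg hb0.not_ge]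

theorem ceil_add_div_mul_toNat {M : ℕ} (hM : 0 < M) {β : ℝ} (hβ : 0 < β) (τ : ℕ) :
    ⌈(β + τ / M) * M⌉.toNat = ⌈β * M⌉.toNat + τ := by
  have hβM : 0 < ⌈β * M⌉ := Int.ceil_pos.mpr (by positivity)
  rw [add_mul, div_mul_cancel₀ _ (by positivity), ← Int.cast_natCast τ, Int.ceil_add_intCast]
  exact Int.toNat_add_nat hβM.le τ

section Overcoverage

variable {Ω : Type*} [MeasurableSpace Ω] (P : Measure Ω) [IsFiniteMeasure P] {m : ℕ}
  (S : Ω → Fin (m + 1) → ℝ) {k τ : ℕ}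

theorem measureReal_last_le_orderStat_le_add_switchCoef {q : ℕ} (hk1 : 1 ≤ k) (hk : k ≤ m + 1)
    (hq : 1 ≤ q) (hqτ : q + τ ≤ m + 1) :
    (P {ω | S ω (Fin.last m) ≤ orderStat (S ω) q}).toReal
      ≤ (P {ω | S ω ⟨k - 1, by omega⟩ ≤ orderStat (S ω) (q + τ)}).toReal
        + switchCoef P S k τ := by
  let last : Fin (m + 1 - τ) := ⟨m + 1 - τ - 1, by omega⟩
  let E : Set (Fin (m + 1 - τ) → ℝ) := {v | #{j | v j < v last} < q}
  have hE : ∀ v, v ∈ E ↔ v last ≤ orderStat v q := fun v => by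
    rw [← not_lt, orderStat_lt_iff v hq (by omega), not_le]
    rfl
  have hsub0 : {ω | S ω (Fin.last m) ≤ orderStat (S ω) q}
      ⊆ (fun ω => delta0 (m + 1) k τ (S ω)) ⁻¹' E := by
    intro ω hω
    rw [Set.mem_preimage, hE, delta0_apply_last _ hk1 (by omega), delta0_eq_comp]
    exact hω.trans (orderStat_le_orderStat_comp _ delta0_id_injective hq (by omega))
  have hsub1 : (fun ω => delta1 (m + 1) k τ (S ω)) ⁻¹' E
      ⊆ {ω | S ω ⟨k - 1, by omega⟩ ≤ orderStat (S ω) (q + τ)} := by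
    intro ω hω
    rw [Set.mem_preimage, hE, delta1_apply_last _ hk1 hk (by omega), delta1_eq_comp] at hω
    have hcomp := orderStat_comp_le_orderStat_add (S ω)
      (delta1_id_injective (m := m + 1) (k := k) (τ := τ)) hq (by omega)
    rw [show m + 1 - (m + 1 - τ) = τ by omega] at hcomp
    exact hω.trans hcomp
  calc (P {ω | S ω (Fin.last m) ≤ orderStat (S ω) q}).toReal
      ≤ (P ((fun ω => delta0 (m + 1) k τ (S ω)) ⁻¹' E)).toReal := measureReal_mono hsub0
    _ ≤ (P ((fun ω => delta1 (m + 1) k τ (S ω)) ⁻¹' E)).toReal + switchCoef P S k τ :=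
        measureReal_preimage_le_add_dTV P _ _ (measurableSet_card_filter_lt_lt last q)
    _ ≤ _ := add_le_add_left (measureReal_mono hsub1) _

theorem measureReal_last_le_quantile_le_add_switchCoef {β : ℝ} (hβ : 0 < β)
    (hb : β + τ / ((m + 1 : ℕ) : ℝ) ≤ 1) (hk1 : 1 ≤ k) (hk : k ≤ m + 1) :
    (P {ω | (S ω (Fin.last m) : EReal) ≤ Quantile β (S ω)}).toReal
      ≤ (P {ω | (S ω ⟨k - 1, by omega⟩ : EReal)
            ≤ Quantile (β + τ / ((m + 1 : ℕ) : ℝ)) (S ω)}).toReal + switchCoef P S k τ := by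
  have hτ : 0 ≤ (τ : ℝ) / ((m + 1 : ℕ) : ℝ) := by positivity
  have hq : 1 ≤ ⌈β * (m + 1 : ℕ)⌉.toNat := by
    have := Int.ceil_pos.mpr (by positivity : 0 < β * (m + 1 : ℕ))
    omega
  have hqτ : ⌈β * (m + 1 : ℕ)⌉.toNat + τ ≤ m + 1 := by
    rw [← ceil_add_div_mul_toNat m.succ_pos hβ, Int.toNat_le, Int.ceil_le]
    exact_mod_cast mul_le_of_le_one_left (by positivity) hb
  simp only [quantile_eq_orderStat _ hβ (by linarith), quantile_eq_orderStat _ (by linarith) hb,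
    ceil_add_div_mul_toNat m.succ_pos hβ, EReal.coe_le_coe_iff]
  exact measureReal_last_le_orderStat_le_add_switchCoef P S hk1 hk hq hqτ

end Overcoverage

/-- One-step overcoverage comparison (inequality (10) in the proof of Theorem 3). -/
theorem stmt14 {Ω : Type*} [MeasurableSpace Ω] (P : Measure Ω) [IsProbabilityMeasure P]
    {n L : ℕ} (S : Ω → Fin (n - L + 1) → ℝ)
    (τ : ℕ) (α : ℝ) (hα1 : α < 1)
    (i : ℕ) (hi : L + 1 ≤ i) (hi' : i ≤ n + 1) :
    (P {ω | (S ω (Fin.last (n - L)) : EReal) ≤ Quantile (1 - α) (S ω)}).toReal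
      ≤ (P {ω | (S ω ⟨i - L - 1, by omega⟩ : EReal)
            ≤ Quantile (1 - α + (τ : ℝ) / ((n : ℝ) - L + 1)) (S ω)}).toReal
        + switchCoef P S (i - L) τ := by
  have hM : (n : ℝ) - L + 1 = ((n - L + 1 : ℕ) : ℝ) := by
    push_cast [Nat.cast_sub (show L ≤ n by omega)]
    ring
  rw [hM]
  by_cases hb : 1 - α + τ / ((n - L + 1 : ℕ) : ℝ) ≤ 1
  · exact measureReal_last_le_quantile_le_add_switchCoef P S (by linarith) hb (by omega) (by omega)
  · have hall : {ω | (S ω ⟨i - L - 1, by omega⟩ : EReal)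
        ≤ Quantile (1 - α + τ / ((n - L + 1 : ℕ) : ℝ)) (S ω)} = Set.univ :=
      Set.eq_univ_of_forall fun ω => by
        rw [Set.mem_ofPred_eq, Quantile, if_pos (lt_of_not_ge hb)]
        exact le_top
    rw [hall, measure_univ, ENNReal.toReal_one]
    exact le_add_of_le_of_nonneg measureReal_le_one (dTV_nonneg P _ _)
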